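/- arXiv:1701.01129 — 2 statements merged into one kernel-verified Lean document; each statement's English description precedes it below -/
import Mathlib

section
/- Let x₀ ≥ 2 and y₀ be coprime integers, let c₁ ≥ 1 be a real number, and suppose |ζ^j − (y₀/x₀)^j| ≤ c₁·x₀^{−3} for j = 1 and j = 2, where ζ is a real number. Then for every integer x with 1 ≤ x ≤ x₀²/(2c₁), we have max(‖ζx‖, ‖ζ²x‖) ≥ (1/2)·x₀^{−1}. -/
/-- Distance from a real number to the nearest integer. -/
noncomputable def distNearestInt (t : ℝ) : ℝ := |t - round t|

lemma dist_frac (a n : ℤ) (hn : 0 < n) (hnd : ¬ n ∣ a) :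
    (1:ℝ)/n ≤ distNearestInt ((a:ℝ)/n) := by
  set m := round ((a:ℝ)/(n:ℝ)) with hm
  have hnR : (0:ℝ) < (n:ℝ) := by exact_mod_cast hn
  have hne : a - n * m ≠ 0 := by
    intro h
    exact hnd ⟨m, by linarith [sub_eq_zero.mp h]⟩
  have h1 : (1:ℤ) ≤ |a - n*m| := Int.one_le_abs hne
  have heq : (a:ℝ)/n - m = ((a - n*m : ℤ) : ℝ)/n := by
    push_cast; field_simp
  rw [distNearestInt, ← hm, heq, abs_div, abs_of_pos hnR]
  have h1R : (1:ℝ) ≤ |((a - n*m : ℤ) : ℝ)| := by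
    rw [← Int.cast_abs]; exact_mod_cast h1
  gcongr

lemma dist_lower (t s : ℝ) : distNearestInt s - |t - s| ≤ distNearestInt t := by
  have h1 : distNearestInt s ≤ |s - (round t : ℤ)| := round_le s (round t)
  have h2 : |s - (round t : ℤ)| ≤ |s - t| + |t - (round t : ℤ)| := by
    have : s - (round t : ℤ) = (s - t) + (t - (round t : ℤ)) := by ring
    rw [this]; exact abs_add_le _ _
  have h3 : |s - t| = |t - s| := abs_sub_comm s t
  unfold distNearestInt
  unfold distNearestInt at h1
  linarith

theorem stmt_4 (x₀ y₀ : ℤ) (hx0 : 2 ≤ x₀) (hcop : IsCoprime x₀ y₀)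
    (c₁ : ℝ) (hc : 1 ≤ c₁) (ζ : ℝ)
    (happ : ∀ j : ℕ, j = 1 ∨ j = 2 →
      |ζ ^ j - ((y₀ : ℝ) / (x₀ : ℝ)) ^ j| ≤ c₁ * ((x₀ : ℝ) ^ 3)⁻¹) :
    ∀ x : ℤ, 1 ≤ x → (x : ℝ) ≤ (x₀ : ℝ) ^ 2 / (2 * c₁) →
      (1 / 2) * ((x₀ : ℝ))⁻¹ ≤ max (distNearestInt (ζ * x)) (distNearestInt (ζ ^ 2 * x)) := by
  intro x hx1 hx2
  have hx0R : (2:ℝ) ≤ (x₀:ℝ) := by exact_mod_cast hx0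
  have hx0pos : (0:ℝ) < (x₀:ℝ) := by linarith
  have hx0Z : (0:ℤ) < x₀ := by omega
  have hxR : (1:ℝ) ≤ (x:ℝ) := by exact_mod_cast hx1
  have hc0 : (0:ℝ) < c₁ := by linarith
  have hkey : (x:ℝ) * c₁ ≤ (x₀:ℝ)^2 / 2 := by
    rw [le_div_iff₀ (by positivity : (0:ℝ) < 2*c₁)] at hx2
    nlinarith
  have hbound : (x:ℝ) * (c₁ * ((x₀:ℝ)^3)⁻¹) ≤ 1/2 * ((x₀:ℝ))⁻¹ := by
    have h3 : (0:ℝ) < (x₀:ℝ)^3 := by positivity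
    have heq : (1:ℝ)/2 * ((x₀:ℝ))⁻¹ = ((x₀:ℝ)^2/2) * ((x₀:ℝ)^3)⁻¹ := by
      field_simp
    rw [← mul_assoc, heq]
    exact mul_le_mul_of_nonneg_right hkey (le_of_lt (inv_pos.mpr h3))
  by_cases hd : x₀ ∣ x
  · -- case u = 2 : x = x₀ * k
    obtain ⟨k, hk⟩ := hd
    have hk1 : 1 ≤ k := by nlinarith [hk]
    have hxlt : x < x₀^2 := by
      have h1 : (x:ℝ) ≤ (x₀:ℝ)^2/2 := by
        calc (x:ℝ) ≤ (x₀:ℝ)^2/(2*c₁) := hx2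
          _ ≤ (x₀:ℝ)^2/2 := by
              apply div_le_div_of_nonneg_left (by positivity) (by linarith) (by linarith)
      have : (x:ℝ) < (x₀:ℝ)^2 := by nlinarith
      exact_mod_cast this
    have hklt : k < x₀ := by nlinarith [hk]
    have hnd : ¬ x₀ ∣ (k * y₀^2) := by
      intro h
      have h2 : x₀ ∣ k := (hcop.pow_right (n := 2)).dvd_of_dvd_mul_right h
      have := Int.le_of_dvd (by omega) h2
      omega
    have hfrac := dist_frac (k * y₀^2) x₀ hx0Z hnd
    have hxeq : (x:ℝ) = (x₀:ℝ) * (k:ℝ) := by exact_mod_cast hk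
    have hs : ((k * y₀^2 : ℤ):ℝ)/(x₀:ℝ) = (x:ℝ) * ((y₀:ℝ)/(x₀:ℝ))^2 := by
      push_cast
      rw [hxeq]
      field_simp
    have herr : |ζ^2 * x - ((k * y₀^2 : ℤ):ℝ)/(x₀:ℝ)| ≤ 1/2 * ((x₀:ℝ))⁻¹ := by
      rw [hs]
      have : ζ^2 * x - (x:ℝ) * ((y₀:ℝ)/(x₀:ℝ))^2 = (x:ℝ) * (ζ^2 - ((y₀:ℝ)/(x₀:ℝ))^2) := by
        ring
      rw [this, abs_mul, abs_of_nonneg (by linarith : (0:ℝ) ≤ (x:ℝ))]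
      calc (x:ℝ) * |ζ^2 - ((y₀:ℝ)/(x₀:ℝ))^2|
          ≤ (x:ℝ) * (c₁ * ((x₀:ℝ)^3)⁻¹) := by
            apply mul_le_mul_of_nonneg_left (happ 2 (Or.inr rfl)) (by linarith)
        _ ≤ 1/2 * ((x₀:ℝ))⁻¹ := hbound
    have hlow := dist_lower (ζ^2 * x) (((k * y₀^2 : ℤ):ℝ)/(x₀:ℝ))
    have h1x : (1:ℝ)/(x₀:ℝ) = ((x₀:ℝ))⁻¹ := one_div _
    refine le_max_of_le_right ?_
    rw [h1x] at hfrac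
    linarith
  · -- case u = 1
    have hnd : ¬ x₀ ∣ (x * y₀) := by
      intro h
      exact hd (hcop.dvd_of_dvd_mul_right h)
    have hfrac := dist_frac (x * y₀) x₀ hx0Z hnd
    have hs : ((x * y₀ : ℤ):ℝ)/(x₀:ℝ) = (x:ℝ) * ((y₀:ℝ)/(x₀:ℝ)) := by
      push_cast; ring
    have happ1 : |ζ - (y₀:ℝ)/(x₀:ℝ)| ≤ c₁ * ((x₀:ℝ)^3)⁻¹ := by
      have := happ 1 (Or.inl rfl)
      simpa using this
    have herr : |ζ * x - ((x * y₀ : ℤ):ℝ)/(x₀:ℝ)| ≤ 1/2 * ((x₀:ℝ))⁻¹ := by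
      rw [hs]
      have : ζ * x - (x:ℝ) * ((y₀:ℝ)/(x₀:ℝ)) = (x:ℝ) * (ζ - (y₀:ℝ)/(x₀:ℝ)) := by
        ring
      rw [this, abs_mul, abs_of_nonneg (by linarith : (0:ℝ) ≤ (x:ℝ))]
      calc (x:ℝ) * |ζ - (y₀:ℝ)/(x₀:ℝ)|
          ≤ (x:ℝ) * (c₁ * ((x₀:ℝ)^3)⁻¹) := by
            apply mul_le_mul_of_nonneg_left happ1 (by linarith)
        _ ≤ 1/2 * ((x₀:ℝ))⁻¹ := hbound
    have hlow := dist_lower (ζ * x) (((x * y₀ : ℤ):ℝ)/(x₀:ℝ))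
    have h1x : (1:ℝ)/(x₀:ℝ) = ((x₀:ℝ))⁻¹ := one_div _
    refine le_max_of_le_left ?_
    rw [h1x] at hfrac
    linarith
end

section
/- (Gelfond's Lemma, lower bound) Let P and Q be nonzero polynomials with integer (or real) coefficients and let d = deg(P·Q). Then H(P)·H(Q) ≤ 2^d·H(P·Q), where H denotes the height. -/
open Polynomial

lemma central_sq (k : ℕ) : (3*k+1) * (Nat.centralBinom k)^2 ≤ 16^k := by
  induction k with
  | zero => simp
  | succ k ih =>
    have h := Nat.succ_mul_centralBinom_succ k
    have hpos : 0 < (k+1)^2 := by positivity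
    apply Nat.le_of_mul_le_mul_left _ hpos
    have e1 : (k+1)^2 * ((3*(k+1)+1) * (Nat.centralBinom (k+1))^2)
        = (3*k+4) * ((k+1) * Nat.centralBinom (k+1))^2 := by ring
    rw [e1, h]
    have e2 : (3*k+4) * (2*(2*k+1) * Nat.centralBinom k)^2
        = (3*k+4)*(2*k+1)^2 * (4 * Nat.centralBinom k ^2) := by ring
    rw [e2]
    calc (3*k+4)*(2*k+1)^2 * (4 * Nat.centralBinom k ^2)
        ≤ 4*(k+1)^2*(3*k+1) * (4 * Nat.centralBinom k ^2) := by
          apply Nat.mul_le_mul_right; nlinarith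
      _ = 4*(k+1)^2 * (4 * ((3*k+1) * Nat.centralBinom k ^2)) := by ring
      _ ≤ 4*(k+1)^2 * (4 * 16^k) := by
          apply Nat.mul_le_mul_left; exact Nat.mul_le_mul_left _ ih
      _ = (k+1)^2 * 16^(k+1) := by ring

lemma choose_sq_le (n i : ℕ) : (n+1) * (n.choose i)^2 ≤ 4^n := by
  have h1 : n.choose i ≤ n.choose (n/2) := Nat.choose_le_middle i n
  have key : (n+1) * (n.choose (n/2))^2 ≤ 4^n := by
    rcases Nat.even_or_odd n with ⟨k, hk⟩ | ⟨k, hk⟩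
    · subst hk
      have hd : (k+k)/2 = k := by omega
      rw [hd]
      have : (k+k).choose k = Nat.centralBinom k := by
        rw [Nat.centralBinom]; congr 1; omega
      rw [this]
      calc (k+k+1) * (Nat.centralBinom k)^2 ≤ (3*k+1) * (Nat.centralBinom k)^2 := by
            apply Nat.mul_le_mul_right; omega
        _ ≤ 16^k := central_sq k
        _ ≤ 4^(k+k) := by rw [show (16:ℕ) = 4^2 by norm_num, ← pow_mul]; apply Nat.pow_le_pow_right <;> omega
    · subst hk
      have hd : (2*k+1)/2 = k := by omega
      rw [hd]
      have hc2 : 2 * ((2*k+1).choose k) = Nat.centralBinom (k+1) := by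
        rw [Nat.centralBinom]
        have h2 : 2*(k+1) = (2*k+1) + 1 := by ring
        rw [h2, Nat.choose_succ_succ']
        have hsymm : (2*k+1).choose (k+1) = (2*k+1).choose k := by
          have := Nat.choose_symm (show k+1 ≤ 2*k+1 by omega)
          rw [show 2*k+1-(k+1) = k by omega] at this
          omega
        omega
      apply Nat.le_of_mul_le_mul_left _ (show 0 < 4 by norm_num)
      calc 4 * ((2*k+1+1) * ((2*k+1).choose k)^2)
          = (2*k+2) * (2*((2*k+1).choose k))^2 := by ring
        _ = (2*k+2) * (Nat.centralBinom (k+1))^2 := by rw [hc2]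
        _ ≤ (3*(k+1)+1) * (Nat.centralBinom (k+1))^2 := by apply Nat.mul_le_mul_right; omega
        _ ≤ 16^(k+1) := central_sq (k+1)
        _ = 4 * (4 * 16^k) := by ring
        _ ≤ 4 * 4^(2*k+1) := by
            apply Nat.mul_le_mul_left
            rw [show (16:ℕ) = 4^2 by norm_num, ← pow_mul]
            calc 4 * 4^(2*k) = 4^(2*k+1) := by ring
              _ ≤ 4^(2*k+1) := le_refl _
  calc (n+1) * (n.choose i)^2 ≤ (n+1) * (n.choose (n/2))^2 := by
        apply Nat.mul_le_mul_left; exact Nat.pow_le_pow_left h1 2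
    _ ≤ 4^n := key

lemma binom_combine (n m i j : ℕ) :
    (n + m + 1) * ((n.choose i)^2 * (m.choose j)^2) ≤ 4^(n+m) := by
  calc (n + m + 1) * ((n.choose i)^2 * (m.choose j)^2)
      ≤ ((n+1)*(m+1)) * ((n.choose i)^2 * (m.choose j)^2) := by
        apply Nat.mul_le_mul_right; nlinarith
    _ = ((n+1) * (n.choose i)^2) * ((m+1) * (m.choose j)^2) := by ring
    _ ≤ 4^n * 4^m := Nat.mul_le_mul (choose_sq_le n i) (choose_sq_le m j)
    _ = 4^(n+m) := (pow_add 4 n m).symm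

noncomputable def nsum (p : Polynomial ℂ) : ℝ :=
  ∑ i ∈ Finset.range (p.natDegree + 1), Complex.normSq (p.coeff i)

lemma nsum_eq_sum_range {p : Polynomial ℂ} {m : ℕ} (h : p.natDegree < m) :
    nsum p = ∑ k ∈ Finset.range m, Complex.normSq (p.coeff k) := by
  unfold nsum
  apply Finset.sum_subset (Finset.range_subset_range.2 h)
  intro x _ hx
  rw [Polynomial.coeff_eq_zero_of_natDegree_lt, map_zero]
  simp only [Finset.mem_range, not_lt] at hx
  omega

lemma normSq_key (α a b : ℂ) :
    Complex.normSq (a - α * b)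
      = Complex.normSq ((starRingEnd ℂ) α * a - b)
        + (1 - Complex.normSq α) * (Complex.normSq a - Complex.normSq b) := by
  simp only [Complex.normSq_apply, Complex.sub_re, Complex.sub_im, Complex.mul_re,
    Complex.mul_im, Complex.conj_re, Complex.conj_im]
  ring

lemma sum_swap (t : Polynomial ℂ) (α : ℂ) (m : ℕ) (hm : t.natDegree < m) :
    ∑ k ∈ Finset.range (m+1), Complex.normSq (((X - C α) * t).coeff k)
      = ∑ k ∈ Finset.range (m+1), Complex.normSq (((C ((starRingEnd ℂ) α) * X - 1) * t).coeff k) := by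
  have hu : ∀ k, ((X - C α) * t).coeff (k+1) = t.coeff k - α * t.coeff (k+1) := by
    intro k
    simp [sub_mul, Polynomial.coeff_X_mul, Polynomial.coeff_C_mul]
  have hu0 : ((X - C α) * t).coeff 0 = -(α * t.coeff 0) := by
    simp [sub_mul, Polynomial.mul_coeff_zero, Polynomial.coeff_C_mul]
  have hv : ∀ k, ((C ((starRingEnd ℂ) α) * X - 1) * t).coeff (k+1)
      = (starRingEnd ℂ) α * t.coeff k - t.coeff (k+1) := by
    intro k
    simp [sub_mul, mul_assoc, Polynomial.coeff_X_mul, Polynomial.coeff_C_mul]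
  have hv0 : ((C ((starRingEnd ℂ) α) * X - 1) * t).coeff 0 = -(t.coeff 0) := by
    simp [sub_mul, Polynomial.mul_coeff_zero, Polynomial.coeff_C_mul]
  rw [Finset.sum_range_succ' _ m, Finset.sum_range_succ' _ m, hu0, hv0]
  have hstep : ∀ k ∈ Finset.range m,
      Complex.normSq (((X - C α) * t).coeff (k+1))
        = Complex.normSq (((C ((starRingEnd ℂ) α) * X - 1) * t).coeff (k+1))
          + (1 - Complex.normSq α) * (Complex.normSq (t.coeff k) - Complex.normSq (t.coeff (k+1))) := by
    intro k _
    rw [hu k, hv k]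
    exact normSq_key α (t.coeff k) (t.coeff (k+1))
  rw [Finset.sum_congr rfl hstep, Finset.sum_add_distrib, ← Finset.mul_sum,
    Finset.sum_range_sub' (fun k => Complex.normSq (t.coeff k)) m]
  have hzero : t.coeff m = 0 := Polynomial.coeff_eq_zero_of_natDegree_lt hm
  rw [hzero]
  simp only [map_zero, map_neg, Complex.normSq_neg, map_mul]
  ring

/-- The factor-swapping function. -/
noncomputable def gfun (α : ℂ) : Polynomial ℂ :=
  if 1 < norm α then C ((starRingEnd ℂ) α) * X - 1 else X - C α

lemma natDegree_CXsub1_le (c : ℂ) : (C c * X - 1 : Polynomial ℂ).natDegree ≤ 1 := by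
  apply le_trans (Polynomial.natDegree_sub_le _ _)
  have h1 : (C c * X : Polynomial ℂ).natDegree ≤ 1 := by
    simpa using Polynomial.natDegree_C_mul_le c X
  exact max_le h1 (by simp)

lemma natDegree_gfun_le (α : ℂ) : (gfun α).natDegree ≤ 1 := by
  unfold gfun
  split_ifs
  · exact natDegree_CXsub1_le _
  · exact le_of_eq (Polynomial.natDegree_X_sub_C α)

lemma nsum_swap (α : ℂ) (w : Polynomial ℂ) : nsum ((X - C α) * w) = nsum (gfun α * w) := by
  unfold gfun
  split_ifs with h
  · have h1 : ((X - C α) * w).natDegree < w.natDegree + 1 + 1 := by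
      have := Polynomial.natDegree_mul_le (p := X - C α) (q := w)
      rw [Polynomial.natDegree_X_sub_C] at this
      omega
    have h2 : ((C ((starRingEnd ℂ) α) * X - 1) * w).natDegree < w.natDegree + 1 + 1 := by
      have h3 := Polynomial.natDegree_mul_le (p := C ((starRingEnd ℂ) α) * X - 1) (q := w)
      have h4 : (C ((starRingEnd ℂ) α) * X - 1 : Polynomial ℂ).natDegree ≤ 1 :=
        natDegree_CXsub1_le _
      omega
    rw [nsum_eq_sum_range h1, nsum_eq_sum_range h2]
    exact sum_swap w α (w.natDegree + 1) (by omega)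
  · rfl

lemma nsum_prod_invariant (s : Multiset ℂ) : ∀ t : Polynomial ℂ,
    nsum ((s.map (fun α => X - C α)).prod * t) = nsum ((s.map gfun).prod * t) := by
  induction s using Multiset.induction_on with
  | empty => intro t; simp
  | cons α s ih =>
    intro t
    rw [Multiset.map_cons, Multiset.map_cons, Multiset.prod_cons, Multiset.prod_cons]
    calc nsum ((X - C α) * (s.map (fun α => X - C α)).prod * t)
        = nsum ((X - C α) * ((s.map (fun α => X - C α)).prod * t)) := by rw [mul_assoc]
      _ = nsum (gfun α * ((s.map (fun α => X - C α)).prod * t)) := nsum_swap α _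
      _ = nsum ((s.map (fun α => X - C α)).prod * (gfun α * t)) := by ring_nf
      _ = nsum ((s.map gfun).prod * (gfun α * t)) := ih _
      _ = nsum (gfun α * (s.map gfun).prod * t) := by ring_nf


/-- Mahler measure via roots. -/
noncomputable def mm (p : Polynomial ℂ) : ℝ :=
  norm p.leadingCoeff * (p.roots.map (fun α => max 1 (norm α))).prod

lemma one_le_prod_max (s : Multiset ℂ) : 1 ≤ (s.map (fun α => max 1 (norm α))).prod := by
  apply Multiset.one_le_prod
  intro a ha
  obtain ⟨α, _, rfl⟩ := Multiset.mem_map.1 ha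
  exact le_max_left _ _

lemma mm_nonneg (p : Polynomial ℂ) : 0 ≤ mm p :=
  mul_nonneg (norm_nonneg _) (le_trans zero_le_one (one_le_prod_max _))

lemma mm_mul {p q : Polynomial ℂ} (hp : p ≠ 0) (hq : q ≠ 0) : mm (p*q) = mm p * mm q := by
  unfold mm
  rw [Polynomial.leadingCoeff_mul, norm_mul, Polynomial.roots_mul (mul_ne_zero hp hq),
    Multiset.map_add, Multiset.prod_add]
  ring

lemma leadingCoeff_gfun (α : ℂ) : (gfun α).leadingCoeff
    = if 1 < norm α then (starRingEnd ℂ) α else 1 := by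
  unfold gfun
  split_ifs with h
  · have hne : (starRingEnd ℂ) α ≠ 0 := by
      simp only [ne_eq, _root_.map_eq_zero]
      intro hz; rw [hz] at h; norm_num at h
    have : (C ((starRingEnd ℂ) α) * X - 1 : Polynomial ℂ) = C ((starRingEnd ℂ) α) * X + C (-1) := by
      simp [sub_eq_add_neg]
    rw [this, Polynomial.leadingCoeff_linear hne]
  · exact Polynomial.leadingCoeff_X_sub_C α

lemma normSq_leadingCoeff_gfun (α : ℂ) :
    Complex.normSq (gfun α).leadingCoeff = (max 1 (norm α))^2 := by
  rw [leadingCoeff_gfun]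
  split_ifs with h
  · rw [Complex.normSq_conj, ← Complex.sq_norm, max_eq_right h.le]
  · push_neg at h
    rw [max_eq_left h]
    simp

lemma landau (p : Polynomial ℂ) : mm p ^ 2 ≤ nsum p := by
  set s := p.roots with hs
  have hsplit : p = C p.leadingCoeff * (s.map (fun a => X - C a)).prod :=
    (IsAlgClosed.splits p).eq_prod_roots
  set q := (s.map gfun).prod * C p.leadingCoeff with hq
  have h1 : nsum p = nsum q := by
    conv_lhs => rw [hsplit, mul_comm]
    exact nsum_prod_invariant s (C p.leadingCoeff)
  have h2 : mm p ^ 2 = Complex.normSq q.leadingCoeff := by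
    rw [hq, Polynomial.leadingCoeff_mul, Polynomial.leadingCoeff_multiset_prod,
      Polynomial.leadingCoeff_C, map_mul, map_multiset_prod, Multiset.map_map, Multiset.map_map]
    have hcong : s.map (fun α => Complex.normSq ((gfun α).leadingCoeff))
        = s.map (fun α => (max 1 (norm α))^2) :=
      Multiset.map_congr rfl (fun α _ => normSq_leadingCoeff_gfun α)
    show mm p ^ 2 = (s.map (fun α => Complex.normSq ((gfun α).leadingCoeff))).prod * Complex.normSq p.leadingCoeff
    rw [hcong, Multiset.prod_map_pow, ← Complex.sq_norm]
    unfold mm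
    rw [← hs]
    ring
  have h3 : Complex.normSq q.leadingCoeff ≤ nsum q := by
    rw [← Polynomial.coeff_natDegree]
    exact Finset.single_le_sum (fun i _ => Complex.normSq_nonneg _) (by simp)
  rw [h1, h2]; exact h3

lemma abs_multiset_sum (m : Multiset ℂ) : norm m.sum ≤ (m.map norm).sum := by
  induction m using Multiset.induction_on with
  | empty => simp
  | cons a t ih =>
    simp only [Multiset.sum_cons, Multiset.map_cons]
    exact le_trans (norm_add_le _ _) (by linarith)

lemma abs_multiset_prod (m : Multiset ℂ) : norm m.prod = (m.map norm).prod := by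
  induction m using Multiset.induction_on with
  | empty => simp
  | cons a t ih => simp only [Multiset.prod_cons, Multiset.map_cons, norm_mul, ih]

lemma prod_map_le (t : Multiset ℂ) :
    (t.map norm).prod ≤ (t.map (fun α => max 1 (norm α))).prod := by
  induction t using Multiset.induction_on with
  | empty => simp
  | cons a t ih =>
    simp only [Multiset.map_cons, Multiset.prod_cons]
    have hnn : (0:ℝ) ≤ (t.map norm).prod := by
      apply Multiset.prod_nonneg
      intro x hx
      obtain ⟨α, -, rfl⟩ := Multiset.mem_map.1 hx
      exact norm_nonneg _
    exact mul_le_mul (le_max_right _ _) ih hnn (le_trans zero_le_one (le_max_left _ _))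

lemma esymm_bound (s : Multiset ℂ) (j : ℕ) :
    norm (s.esymm j)
      ≤ ((Multiset.card s).choose j : ℝ) * (s.map (fun α => max 1 (norm α))).prod := by
  unfold Multiset.esymm
  apply le_trans (abs_multiset_sum _)
  rw [Multiset.map_map]
  have hb : ∀ x ∈ (Multiset.powersetCard j s).map (fun t => norm (Multiset.prod t)),
      x ≤ (s.map (fun α => max 1 (norm α))).prod := by
    intro x hx
    obtain ⟨t, ht, rfl⟩ := Multiset.mem_map.1 hx
    obtain ⟨hts, -⟩ := Multiset.mem_powersetCard.1 ht
    obtain ⟨u, rfl⟩ := Multiset.le_iff_exists_add.1 hts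
    rw [abs_multiset_prod, Multiset.map_add, Multiset.prod_add]
    calc (t.map norm).prod
        = (t.map norm).prod * 1 := (mul_one _).symm
      _ ≤ (t.map (fun α => max 1 (norm α))).prod
            * (u.map (fun α => max 1 (norm α))).prod :=
          mul_le_mul (prod_map_le t) (one_le_prod_max u) zero_le_one
            (le_trans zero_le_one (one_le_prod_max t))
  apply le_trans (Multiset.sum_le_card_nsmul _ _ hb)
  rw [Multiset.card_map, Multiset.card_powersetCard, nsmul_eq_mul]

lemma coeff_abs_le_mm (p : Polynomial ℂ) (i : ℕ) :
    norm (p.coeff i) ≤ (p.natDegree.choose i : ℝ) * mm p := by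
  rcases le_or_gt i p.natDegree with hi | hi
  · have hcard : Multiset.card p.roots = p.natDegree := by
      exact (IsAlgClosed.splits p).natDegree_eq_card_roots.symm
    have hsplit : p = C p.leadingCoeff * (p.roots.map (fun a => X - C a)).prod :=
      (IsAlgClosed.splits p).eq_prod_roots
    have hco : p.coeff i = p.leadingCoeff
        * ((-1)^(Multiset.card p.roots - i) * p.roots.esymm (Multiset.card p.roots - i)) := by
      conv_lhs => rw [hsplit]
      rw [Polynomial.coeff_C_mul,
        Multiset.prod_X_sub_C_coeff p.roots (show i ≤ Multiset.card p.roots by omega)]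
    rw [hco, norm_mul, norm_mul]
    have habs1 : norm ((-1 : ℂ)^(Multiset.card p.roots - i)) = 1 := by
      rw [norm_pow]; simp
    rw [habs1, one_mul]
    calc norm p.leadingCoeff * norm (p.roots.esymm (Multiset.card p.roots - i))
        ≤ norm p.leadingCoeff
            * (((Multiset.card p.roots).choose (Multiset.card p.roots - i) : ℝ)
              * (p.roots.map (fun α => max 1 (norm α))).prod) :=
          mul_le_mul_of_nonneg_left (esymm_bound _ _) (norm_nonneg _)
      _ = ((Multiset.card p.roots).choose (Multiset.card p.roots - i) : ℝ) * mm p := by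
          unfold mm; ring
      _ = (p.natDegree.choose i : ℝ) * mm p := by
          rw [hcard, Nat.choose_symm hi]
  · rw [Polynomial.coeff_eq_zero_of_natDegree_lt hi, Nat.choose_eq_zero_of_lt hi]
    simp

/-- Height of an integer polynomial: maximum absolute value of its coefficients. -/
def polyHeight (P : Polynomial ℤ) : ℕ := P.support.sup fun i => (P.coeff i).natAbs

lemma habs (R : Polynomial ℤ) (k : ℕ) :
    norm ((R.map (Int.castRingHom ℂ)).coeff k) = ((R.coeff k).natAbs : ℝ) := by
  rw [Polynomial.coeff_map]
  have h1 : (Int.castRingHom ℂ) (R.coeff k) = ((R.coeff k : ℤ) : ℂ) := rfl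
  rw [h1, Complex.norm_intCast, Nat.cast_natAbs, Int.cast_abs]

lemma hHle (R : Polynomial ℤ) (k : ℕ) : (R.coeff k).natAbs ≤ polyHeight R := by
  by_cases h : k ∈ R.support
  · exact Finset.le_sup (f := fun i => (R.coeff i).natAbs) h
  · rw [Polynomial.notMem_support_iff.1 h]; simp

lemma hHex (R : Polynomial ℤ) (hR : R ≠ 0) :
    ∃ k ≤ R.natDegree, polyHeight R = (R.coeff k).natAbs := by
  obtain ⟨k, hk, he⟩ := Finset.exists_mem_eq_sup R.support (Polynomial.support_nonempty.2 hR) (fun i => (R.coeff i).natAbs)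
  exact ⟨k, Polynomial.le_natDegree_of_mem_supp k hk, he⟩

theorem stmt_10 (P Q : Polynomial ℤ) (hP : P ≠ 0) (hQ : Q ≠ 0) :
    polyHeight P * polyHeight Q ≤ 2 ^ (P * Q).natDegree * polyHeight (P * Q) := by
  have hinj : Function.Injective (Int.castRingHom ℂ) := Int.cast_injective
  set n := P.natDegree with hn
  set m := Q.natDegree with hm
  have hPQ : P * Q ≠ 0 := mul_ne_zero hP hQ
  have hd : (P * Q).natDegree = n + m := Polynomial.natDegree_mul hP hQ
  obtain ⟨i, hi, hPi⟩ := hHex P hP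
  obtain ⟨j, hj, hQj⟩ := hHex Q hQ
  set Pc := P.map (Int.castRingHom ℂ) with hPcdef
  set Qc := Q.map (Int.castRingHom ℂ) with hQcdef
  have hPc : Pc ≠ 0 := (Polynomial.map_ne_zero_iff hinj).2 hP
  have hQc : Qc ≠ 0 := (Polynomial.map_ne_zero_iff hinj).2 hQ
  have hnP : Pc.natDegree = n := Polynomial.natDegree_map_eq_of_injective hinj P
  have hnQ : Qc.natDegree = m := Polynomial.natDegree_map_eq_of_injective hinj Q
  have hRc : Pc * Qc = (P * Q).map (Int.castRingHom ℂ) := (Polynomial.map_mul _).symm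
  have hnR : (Pc * Qc).natDegree = n + m := by
    rw [hRc, Polynomial.natDegree_map_eq_of_injective hinj, hd]
  -- coefficient bounds
  have hstep1 : (polyHeight P : ℝ) ≤ (n.choose i : ℝ) * mm Pc := by
    have h := coeff_abs_le_mm Pc i
    rw [hnP, hPcdef, habs P i] at h
    rw [hPi]; exact h
  have hstep2 : (polyHeight Q : ℝ) ≤ (m.choose j : ℝ) * mm Qc := by
    have h := coeff_abs_le_mm Qc j
    rw [hnQ, hQcdef, habs Q j] at h
    rw [hQj]; exact h
  -- nsum bound
  have hstep5 : nsum (Pc * Qc) ≤ ((n + m + 1 : ℕ) : ℝ) * (polyHeight (P*Q) : ℝ)^2 := by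
    unfold nsum
    rw [hnR]
    have hterm : ∀ k ∈ Finset.range (n + m + 1),
        Complex.normSq ((Pc * Qc).coeff k) ≤ (polyHeight (P*Q) : ℝ)^2 := by
      intro k _
      rw [← Complex.sq_norm, hRc, habs (P*Q) k]
      have hle : (((P*Q).coeff k).natAbs : ℝ) ≤ (polyHeight (P*Q) : ℝ) := by
        exact_mod_cast hHle (P*Q) k
      exact pow_le_pow_left₀ (by positivity) hle 2
    apply le_trans (Finset.sum_le_card_nsmul _ _ _ hterm)
    rw [Finset.card_range, nsmul_eq_mul]
  -- combine
  have hmm : mm Pc * mm Qc = mm (Pc * Qc) := (mm_mul hPc hQc).symm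
  have hlan := landau (Pc * Qc)
  have hbin : (((n + m + 1) * ((n.choose i)^2 * (m.choose j)^2) : ℕ) : ℝ) ≤ ((4^(n+m) : ℕ) : ℝ) :=
    Nat.cast_le.2 (binom_combine n m i j)
  push_cast at hbin
  have hHP : (0:ℝ) ≤ (polyHeight P : ℝ) := Nat.cast_nonneg _
  have hHQ : (0:ℝ) ≤ (polyHeight Q : ℝ) := Nat.cast_nonneg _
  have hH : (0:ℝ) ≤ (polyHeight (P*Q) : ℝ) := Nat.cast_nonneg _
  have hmmP := mm_nonneg Pc
  have hmmQ := mm_nonneg Qc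
  have hchain : ((polyHeight P : ℝ) * (polyHeight Q : ℝ))^2
      ≤ ((2:ℝ)^(n+m) * (polyHeight (P*Q) : ℝ))^2 := by
    have h1 : (polyHeight P : ℝ) * (polyHeight Q : ℝ)
        ≤ ((n.choose i : ℝ) * (m.choose j : ℝ)) * mm (Pc * Qc) := by
      rw [← hmm]
      calc (polyHeight P : ℝ) * (polyHeight Q : ℝ)
          ≤ ((n.choose i : ℝ) * mm Pc) * ((m.choose j : ℝ) * mm Qc) :=
            mul_le_mul hstep1 hstep2 hHQ (by positivity)
        _ = ((n.choose i : ℝ) * (m.choose j : ℝ)) * (mm Pc * mm Qc) := by ring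
    have h2 : ((polyHeight P : ℝ) * (polyHeight Q : ℝ))^2
        ≤ (((n.choose i : ℝ) * (m.choose j : ℝ)))^2 * (mm (Pc*Qc))^2 := by
      rw [← mul_pow]
      exact pow_le_pow_left₀ (by positivity) h1 2
    have h3 : (((n.choose i : ℝ) * (m.choose j : ℝ)))^2 * (mm (Pc*Qc))^2
        ≤ (((n.choose i : ℝ) * (m.choose j : ℝ)))^2 * (((n + m + 1 : ℕ) : ℝ) * (polyHeight (P*Q) : ℝ)^2) :=
      mul_le_mul_of_nonneg_left (le_trans hlan hstep5) (by positivity)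
    have h4 : (((n.choose i : ℝ) * (m.choose j : ℝ)))^2 * (((n + m + 1 : ℕ) : ℝ) * (polyHeight (P*Q) : ℝ)^2)
        ≤ (4:ℝ)^(n+m) * (polyHeight (P*Q) : ℝ)^2 := by
      have h5 : (((n.choose i : ℝ) * (m.choose j : ℝ)))^2 * ((n + m + 1 : ℕ) : ℝ) ≤ (4:ℝ)^(n+m) := by
        push_cast
        nlinarith [hbin]
      calc (((n.choose i : ℝ) * (m.choose j : ℝ)))^2 * (((n + m + 1 : ℕ) : ℝ) * (polyHeight (P*Q) : ℝ)^2)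
          = ((((n.choose i : ℝ) * (m.choose j : ℝ)))^2 * ((n + m + 1 : ℕ) : ℝ)) * (polyHeight (P*Q) : ℝ)^2 := by ring
        _ ≤ (4:ℝ)^(n+m) * (polyHeight (P*Q) : ℝ)^2 :=
            mul_le_mul_of_nonneg_right h5 (by positivity)
    have h6 : ((2:ℝ)^(n+m) * (polyHeight (P*Q) : ℝ))^2 = (4:ℝ)^(n+m) * (polyHeight (P*Q) : ℝ)^2 := by
      rw [mul_pow, ← pow_mul, show (4:ℝ) = 2^2 by norm_num, ← pow_mul]
      ring_nf
    rw [h6]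
    linarith
  have hfin : (polyHeight P : ℝ) * (polyHeight Q : ℝ) ≤ (2:ℝ)^(n+m) * (polyHeight (P*Q) : ℝ) := by
    have := (pow_le_pow_iff_left₀ (by positivity) (by positivity) (two_ne_zero)).1 hchain
    exact this
  rw [hd]
  exact_mod_cast hfin
end
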